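/- arXiv:2001.00143 — 3 statements merged into one kernel-verified Lean document; each statement's English description precedes it below -/
import Mathlib

section
/- Let n, m₁ ≥ 1, m₂ be positive integers, let c ∈ ℝⁿ with c ≠ 0, let x¹, …, x^K ∈ ℝⁿ be finitely many observations, let x⁰ be a preferred observation, i.e., x⁰ ∈ {x¹,…,x^K} and c·x⁰ ≤ c·xᵏ for all k = 1, …, K, and let G ∈ ℝ^{m₂×n}, h ∈ ℝ^{m₂}. Then there exist A ∈ ℝ^{m₁×n}, b, y ∈ ℝ^{m₁}, and w ∈ ℝ^{m₂} such that: A xᵏ ≥ b componentwise for every k = 1, …, K; c·x⁰ = b·y + h·w; Aᵀy + Gᵀw = c; and every row aᵢ of A has Euclidean norm ‖aᵢ‖ = 1. (In fact one may take w = 0, y = (‖c‖, 0, …, 0), aᵢ = c/‖c‖ for all i, and bᵢ = (c·x⁰)/‖c‖.) -/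
open Matrix

/-!
Take every constraint to be the same normalized objective, `aᵢ = c / ‖c‖`, with right-hand side
`bᵢ = c·x0 / ‖c‖`: the observations are feasible because `x0` minimizes `c·x`, and `x0` attains
equality. A single nonzero dual weight `y = ‖c‖ eᵢ₀` (with `w = 0`) then recovers `c` in the dual
constraint and closes the duality gap.
-/

section

variable {κ ι m p : Type*} [Fintype ι]

lemma sqrt_sum_sq_eq_norm_toLp (c : ι → ℝ) : √(∑ j, c j ^ 2) = ‖WithLp.toLp 2 c‖ := by
  simp [EuclideanSpace.norm_eq]

lemma sqrt_sum_sq_inv_smul_self {c : ι → ℝ} (hc : c ≠ 0) :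
    √(∑ j, ((√(∑ j, c j ^ 2))⁻¹ • c) j ^ 2) = 1 := by
  simp only [sqrt_sum_sq_eq_norm_toLp, WithLp.toLp_smul]
  exact norm_smul_inv_norm (by simpa using hc)

lemma sqrt_sum_sq_ne_zero {c : ι → ℝ} (hc : c ≠ 0) : √(∑ j, c j ^ 2) ≠ 0 := by
  simpa [sqrt_sum_sq_eq_norm_toLp] using hc

theorem exists_MIO_feasible [Fintype m] [DecidableEq m] [Fintype p] (i₀ : m)
    {c : ι → ℝ} (hc : c ≠ 0) (x : κ → ι → ℝ) (x0 : ι → ℝ) (hx0 : ∀ k, c ⬝ᵥ x0 ≤ c ⬝ᵥ x k)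
    (G : Matrix p ι ℝ) (h : p → ℝ) :
    ∃ (A : Matrix m ι ℝ) (b y : m → ℝ) (w : p → ℝ),
      (∀ k i, b i ≤ (A *ᵥ x k) i) ∧
      c ⬝ᵥ x0 = b ⬝ᵥ y + h ⬝ᵥ w ∧
      Aᵀ *ᵥ y + Gᵀ *ᵥ w = c ∧
      (∀ i, √(∑ j, (A i j) ^ 2) = 1) := by
  set N := √(∑ j, c j ^ 2)
  have hN : N ≠ 0 := sqrt_sum_sq_ne_zero hc
  refine ⟨of fun _ => N⁻¹ • c, fun _ => N⁻¹ * (c ⬝ᵥ x0), Pi.single i₀ N, 0, ?_, ?_, ?_, ?_⟩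
  · intro k i
    change N⁻¹ * (c ⬝ᵥ x0) ≤ (N⁻¹ • c) ⬝ᵥ x k
    rw [smul_dotProduct, smul_eq_mul]
    gcongr
    exact hx0 k
  · simp only [dotProduct_single, dotProduct_zero, add_zero]
    field_simp
  · ext j
    simp [mulVec_single, hN]
  · exact fun _ => sqrt_sum_sq_inv_smul_self hc

end

theorem multi_point_MIO_feasible_general
    (n m₁ m₂ K : ℕ) (hm₁ : 0 < m₁)
    (c : Fin n → ℝ) (hc : c ≠ 0)
    (x : Fin K → Fin n → ℝ) (x0 : Fin n → ℝ)
    (hx0pref : ∀ k : Fin K, c ⬝ᵥ x0 ≤ c ⬝ᵥ x k)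
    (G : Matrix (Fin m₂) (Fin n) ℝ) (h : Fin m₂ → ℝ) :
    ∃ (A : Matrix (Fin m₁) (Fin n) ℝ) (b y : Fin m₁ → ℝ) (w : Fin m₂ → ℝ),
      (∀ (k : Fin K) (i : Fin m₁), b i ≤ (A *ᵥ x k) i) ∧
      c ⬝ᵥ x0 = b ⬝ᵥ y + h ⬝ᵥ w ∧
      Aᵀ *ᵥ y + Gᵀ *ᵥ w = c ∧
      (∀ i : Fin m₁, Real.sqrt (∑ j, (A i j) ^ 2) = 1) :=
  exists_MIO_feasible (⟨0, hm₁⟩ : Fin m₁) hc x x0 hx0pref G h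

/-- Proposition 2: the feasible region of the multi-point inverse optimization
problem `MIO` is non-empty.  Given a cost vector `c ≠ 0`, observations
`x 1, …, x K`, a preferred observation `x0` (one of the observations, attaining the
minimum objective value), and known constraint data `G`, `h`, there exist
`A`, `b`, `y`, `w` satisfying primal feasibility `A xᵏ ≥ b` for every observation,
strong duality `c·x0 = b·y + h·w`, dual feasibility `Aᵀ y + Gᵀ w = c`, and
Euclidean normalization `‖aᵢ‖ = 1` of each row of `A`. -/
theorem multi_point_MIO_feasible
    (n m₁ m₂ K : ℕ) (hn : 0 < n) (hm₁ : 0 < m₁) (hm₂ : 0 < m₂)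
    (c : Fin n → ℝ) (hc : c ≠ 0)
    (x : Fin K → Fin n → ℝ) (x0 : Fin n → ℝ)
    (hx0mem : ∃ k : Fin K, x k = x0)
    (hx0pref : ∀ k : Fin K, c ⬝ᵥ x0 ≤ c ⬝ᵥ x k)
    (G : Matrix (Fin m₂) (Fin n) ℝ) (h : Fin m₂ → ℝ) :
    ∃ (A : Matrix (Fin m₁) (Fin n) ℝ) (b y : Fin m₁ → ℝ) (w : Fin m₂ → ℝ),
      (∀ (k : Fin K) (i : Fin m₁), b i ≤ (A *ᵥ x k) i) ∧
      c ⬝ᵥ x0 = b ⬝ᵥ y + h ⬝ᵥ w ∧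
      Aᵀ *ᵥ y + Gᵀ *ᵥ w = c ∧
      (∀ i : Fin m₁, Real.sqrt (∑ j, (A i j) ^ 2) = 1) :=
  multi_point_MIO_feasible_general n m₁ m₂ K hm₁ c hc x x0 hx0pref G h
end

section
/- Let c ∈ ℝⁿ, let x¹, …, x^K ∈ ℝⁿ be observations with preferred observation x⁰ ∈ {x¹,…,x^K} satisfying c·x⁰ ≤ c·xᵏ for all k, and let G ∈ ℝ^{m₂×n}, h ∈ ℝ^{m₂} satisfy G xᵏ ≥ h for all k. Suppose A ∈ ℝ^{m₁×n}, b ∈ ℝ^{m₁}, y ∈ ℝ^{m₁}_{≥0}, w ∈ ℝ^{m₂}_{≥0} satisfy A xᵏ ≥ b for all k, c·x⁰ = b·y + h·w, and Aᵀy + Gᵀw = c, and let X = {x ∈ ℝⁿ : A x ≥ b, G x ≥ h} be the corresponding imputed feasible set. Then the convex hull ℋ of the observations {x¹, …, x^K} satisfies ℋ ⊆ X, and X ⊆ 𝒞 where 𝒞 = {x ∈ ℝⁿ : c·x ≥ c·x⁰}. -/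
open Matrix BigOperators

/-- Lemma 1: any imputed feasible set `X = {x : A x ≥ b, G x ≥ h}` arising from a
feasible solution `(A, b, y, w)` of `MIO` (with nonnegative dual vectors) is squeezed
between the convex hull `ℋ` of the observations and the half-space
`𝒞 = {x : c·x ≥ c·x0}`. -/
theorem imputed_set_between_hull_and_halfspace
    (n m₁ m₂ K : ℕ)
    (c : Fin n → ℝ)
    (x : Fin K → Fin n → ℝ) (x0 : Fin n → ℝ)
    (hx0mem : ∃ k : Fin K, x k = x0)
    (hx0pref : ∀ k : Fin K, c ⬝ᵥ x0 ≤ c ⬝ᵥ x k)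
    (G : Matrix (Fin m₂) (Fin n) ℝ) (h : Fin m₂ → ℝ)
    (hGvalid : ∀ (k : Fin K) (i : Fin m₂), h i ≤ (G *ᵥ x k) i)
    (A : Matrix (Fin m₁) (Fin n) ℝ) (b : Fin m₁ → ℝ)
    (y : Fin m₁ → ℝ) (w : Fin m₂ → ℝ)
    (hy : ∀ i : Fin m₁, 0 ≤ y i) (hw : ∀ i : Fin m₂, 0 ≤ w i)
    (hprimal : ∀ (k : Fin K) (i : Fin m₁), b i ≤ (A *ᵥ x k) i)
    (hstrong : c ⬝ᵥ x0 = b ⬝ᵥ y + h ⬝ᵥ w)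
    (hdual : Aᵀ *ᵥ y + Gᵀ *ᵥ w = c) :
    convexHull ℝ (Set.range x) ⊆
      {z : Fin n → ℝ |
        (∀ i : Fin m₁, b i ≤ (A *ᵥ z) i) ∧ (∀ i : Fin m₂, h i ≤ (G *ᵥ z) i)} ∧
    {z : Fin n → ℝ |
        (∀ i : Fin m₁, b i ≤ (A *ᵥ z) i) ∧ (∀ i : Fin m₂, h i ≤ (G *ᵥ z) i)} ⊆
      {z : Fin n → ℝ | c ⬝ᵥ x0 ≤ c ⬝ᵥ z} := by
  constructor
  · apply convexHull_min
    · rintro _ ⟨k, rfl⟩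
      exact ⟨hprimal k, hGvalid k⟩
    · rintro z1 ⟨hz1A, hz1G⟩ z2 ⟨hz2A, hz2G⟩ a b' ha hb' hab
      constructor
      · intro i
        have : (A *ᵥ (a • z1 + b' • z2)) i = a * (A *ᵥ z1) i + b' * (A *ᵥ z2) i := by
          simp [Matrix.mulVec_add, Matrix.mulVec_smul]
        rw [this]
        calc b i = a * b i + b' * b i := by rw [← add_mul, hab, one_mul]
          _ ≤ a * (A *ᵥ z1) i + b' * (A *ᵥ z2) i := by
              gcongr <;> [exact hz1A i; exact hz2A i]
      · intro i
        have : (G *ᵥ (a • z1 + b' • z2)) i = a * (G *ᵥ z1) i + b' * (G *ᵥ z2) i := by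
          simp [Matrix.mulVec_add, Matrix.mulVec_smul]
        rw [this]
        calc h i = a * h i + b' * h i := by rw [← add_mul, hab, one_mul]
          _ ≤ a * (G *ᵥ z1) i + b' * (G *ᵥ z2) i := by
              gcongr <;> [exact hz1G i; exact hz2G i]
  · rintro z ⟨hzA, hzG⟩
    have key : c ⬝ᵥ z = y ⬝ᵥ (A *ᵥ z) + w ⬝ᵥ (G *ᵥ z) := by
      rw [← hdual, add_dotProduct, Matrix.mulVec_transpose, Matrix.mulVec_transpose,
        ← Matrix.dotProduct_mulVec, ← Matrix.dotProduct_mulVec]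
    have h1 : b ⬝ᵥ y ≤ y ⬝ᵥ (A *ᵥ z) := by
      rw [dotProduct_comm]
      exact Finset.sum_le_sum fun i _ => mul_le_mul_of_nonneg_left (hzA i) (hy i)
    have h2 : h ⬝ᵥ w ≤ w ⬝ᵥ (G *ᵥ z) := by
      rw [dotProduct_comm]
      exact Finset.sum_le_sum fun i _ => mul_le_mul_of_nonneg_left (hzG i) (hw i)
    calc c ⬝ᵥ x0 = b ⬝ᵥ y + h ⬝ᵥ w := hstrong
      _ ≤ y ⬝ᵥ (A *ᵥ z) + w ⬝ᵥ (G *ᵥ z) := add_le_add h1 h2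
      _ = c ⬝ᵥ z := key.symm
end

section
/- Let c ∈ ℝⁿ, let x¹, …, x^K ∈ ℝⁿ be observations with preferred observation x⁰ ∈ {x¹,…,x^K} satisfying c·x⁰ ≤ c·xᵏ for all k. Let G ∈ ℝ^{m₂×n} and h ∈ ℝ^{m₂} be known constraint data whose first row is the half-space 𝒞, i.e., the first row of G equals c and the first entry of h equals c·x⁰. Then for any A ∈ ℝ^{m₁×n} and b ∈ ℝ^{m₁}, the following are equivalent: (a) (A, b) is feasible for eMIO, i.e., aᵢ·xᵏ ≥ bᵢ for every row i and every observation k, and ‖aᵢ‖ = 1 for every row i; (b) there exist y ∈ ℝ^{m₁} and w ∈ ℝ^{m₂} such that (A, b, y, w) is feasible for MIO, i.e., A xᵏ ≥ b for all k, c·x⁰ = b·y + h·w, Aᵀy + Gᵀw = c, and ‖aᵢ‖ = 1 for every row i. (For (a) ⇒ (b) one may take y = 0 and w = (1, 0, …, 0).) -/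
open Matrix BigOperators

/-- Theorem 1: when the half-space `𝒞 = {x : c·x ≥ c·x0}` is included among the
known constraints as the first row of `(G, h)` (i.e. `g₁ = c`, `h₁ = c·x0`),
a pair `(A, b)` is feasible for the reformulated problem `eMIO` (primal feasibility
for each observation plus Euclidean row normalization) if and only if there exist
dual vectors `y`, `w` making `(A, b, y, w)` feasible for `MIO`. -/
theorem eMIO_equiv_MIO
    (n m₁ m₂ K : ℕ) (hm₂ : 0 < m₂)
    (c : Fin n → ℝ)
    (x : Fin K → Fin n → ℝ) (x0 : Fin n → ℝ)
    (hx0mem : ∃ k : Fin K, x k = x0)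
    (hx0pref : ∀ k : Fin K, c ⬝ᵥ x0 ≤ c ⬝ᵥ x k)
    (G : Matrix (Fin m₂) (Fin n) ℝ) (h : Fin m₂ → ℝ)
    (hG1 : G ⟨0, hm₂⟩ = c)
    (hh1 : h ⟨0, hm₂⟩ = c ⬝ᵥ x0)
    (A : Matrix (Fin m₁) (Fin n) ℝ) (b : Fin m₁ → ℝ) :
    ((∀ (i : Fin m₁) (k : Fin K), b i ≤ A i ⬝ᵥ x k) ∧
      (∀ i : Fin m₁, Real.sqrt (∑ j, (A i j) ^ 2) = 1))
    ↔
    (∃ (y : Fin m₁ → ℝ) (w : Fin m₂ → ℝ),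
      (∀ (k : Fin K) (i : Fin m₁), b i ≤ (A *ᵥ x k) i) ∧
      c ⬝ᵥ x0 = b ⬝ᵥ y + h ⬝ᵥ w ∧
      Aᵀ *ᵥ y + Gᵀ *ᵥ w = c ∧
      (∀ i : Fin m₁, Real.sqrt (∑ j, (A i j) ^ 2) = 1)) := by
  constructor
  · rintro ⟨hfeas, hnorm⟩
    refine ⟨0, Pi.single ⟨0, hm₂⟩ 1, fun k i => hfeas i k, ?_, ?_, hnorm⟩
    · simp [dotProduct, Pi.single_apply, hh1]
    · funext j
      simp [mulVec, dotProduct, Pi.single_apply, Finset.sum_ite_eq',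
        Pi.add_apply, transpose_apply, ← hG1]
  · rintro ⟨y, w, hfeas, -, -, hnorm⟩
    exact ⟨fun i k => hfeas k i, hnorm⟩
end
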